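/- Let G be a group, ρ : G → U(1) a group homomorphism, and r a positive integer. The well-defined map from conjugacy classes of G̃_{ρ,r} to conjugacy classes of G, induced by pr₁ (sending the class of (g,ξ) to the class of g), has every fiber of cardinality exactly r; that is, every conjugacy class of G has exactly r liftings to conjugacy classes of G̃_{ρ,r}. -/

import Mathlib

noncomputable section

/-- The fiber-product group `G̃_{ρ,r} = {(g,ξ) ∈ G × U(1) | ρ(g) = ξ^r}`,
realized as a subgroup of `G × Circle`. -/
def rootFiberSubgroup {G : Type*} [Group G] (ρ : G →* Circle) (r : ℕ) :
    Subgroup (G × Circle) where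
  carrier := {p : G × Circle | ρ p.1 = p.2 ^ r}
  one_mem' := by simp
  mul_mem' := by
    intro a b ha hb
    simp only [Set.mem_setOf_eq, Prod.fst_mul, Prod.snd_mul, map_mul, mul_pow] at *
    rw [ha, hb]
  inv_mem' := by
    intro a ha
    simp only [Set.mem_setOf_eq, Prod.fst_inv, Prod.snd_inv, map_inv, inv_pow] at *
    rw [ha]

/-- The subgroup `μ_r ⊆ U(1)` of `r`-th roots of unity. -/
def circleRootsOfUnity (r : ℕ) : Subgroup Circle where
  carrier := {ξ : Circle | ξ ^ r = 1}
  one_mem' := by simp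
  mul_mem' := by
    intro a b ha hb
    simp only [Set.mem_setOf_eq, mul_pow] at *
    rw [ha, hb, mul_one]
  inv_mem' := by
    intro a ha
    simp only [Set.mem_setOf_eq, inv_pow] at *
    rw [ha, inv_one]

/-- The first projection `pr₁ : G̃_{ρ,r} → G`, as a group homomorphism. -/
def rootFiberPr1 {G : Type*} [Group G] (ρ : G →* Circle) (r : ℕ) :
    rootFiberSubgroup ρ r →* G :=
  (MonoidHom.fst G Circle).comp (rootFiberSubgroup ρ r).subtype

/-!
Since `U(1)` is abelian, conjugating `(g, ξ)` by `(h, η)` gives `(h g h⁻¹, ξ)`, and every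
`h ∈ G` lifts to `G̃_{ρ,r}` because `ρ h` has an `r`-th root. Hence `(g, ξ)` and `(g', ξ')` are
conjugate in `G̃_{ρ,r}` iff `g ~ g'` and `ξ = ξ'`, so the lifts of the class of `g` are
parametrised by the `r` solutions of `ξ ^ r = ρ g`.
-/

theorem CommGroup.natCard_pow_eq_eq_natCard_rootsOfUnity {M : Type*} [CommGroup M] {n : ℕ}
    {w ξ₀ : M} (hξ₀ : ξ₀ ^ n = w) :
    Nat.card {ξ : M // ξ ^ n = w} = Nat.card (rootsOfUnity n M) := by
  refine Nat.card_congr ((Equiv.subtypeEquiv (q := fun ξ : M => ξ ^ n = 1)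
    (Equiv.mulRight ξ₀⁻¹) fun ξ => ?_).trans (Equiv.subtypeEquiv toUnits.toEquiv fun ξ => ?_))
  · simp [mul_pow, ← hξ₀, mul_inv_eq_one]
  · simp [mem_rootsOfUnity, ← Units.val_inj]

namespace Circle

theorem exists_pow_eq {n : ℕ} (hn : n ≠ 0) (w : Circle) : ∃ ξ : Circle, ξ ^ n = w :=
  ⟨exp (Complex.arg w / n), by
    rw [← exp_nsmul, nsmul_eq_mul, mul_div_cancel₀ _ (Nat.cast_ne_zero.mpr hn), exp_arg]⟩

theorem natCard_pow_eq {n : ℕ} (hn : n ≠ 0) (w : Circle) :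
    Nat.card {ξ : Circle // ξ ^ n = w} = n := by
  have : NeZero n := ⟨hn⟩
  obtain ⟨ξ₀, hξ₀⟩ := exists_pow_eq hn w
  rw [CommGroup.natCard_pow_eq_eq_natCard_rootsOfUnity hξ₀,
    HasEnoughRootsOfUnity.natCard_rootsOfUnity]

end Circle

section RootFiber

variable {G : Type*} [Group G] {ρ : G →* Circle} {r : ℕ}

theorem isConj_rootFiberSubgroup_iff (hr : r ≠ 0) {x y : rootFiberSubgroup ρ r} :
    IsConj x y ↔ IsConj (x : G × Circle).1 (y : G × Circle).1 ∧
      (x : G × Circle).2 = (y : G × Circle).2 := by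
  simp only [isConj_iff]
  constructor
  · rintro ⟨⟨⟨h, η⟩, -⟩, rfl⟩
    exact ⟨⟨h, rfl⟩, by simp [mul_inv_cancel_comm]⟩
  · rintro ⟨⟨h, hh⟩, hξ⟩
    obtain ⟨η, hη⟩ := Circle.exists_pow_eq hr (ρ h)
    refine ⟨⟨(h, η), hη.symm⟩, Subtype.ext (Prod.ext hh ?_)⟩
    simp [mul_inv_cancel_comm, hξ]

variable (ρ r) in
def rootFiberLift (g : G) (ξ : {ξ : Circle // ξ ^ r = ρ g}) :
    {c : ConjClasses (rootFiberSubgroup ρ r) //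
      ConjClasses.map (rootFiberPr1 ρ r) c = ConjClasses.mk g} :=
  ⟨ConjClasses.mk ⟨(g, ξ), ξ.2.symm⟩, rfl⟩

theorem rootFiberLift_bijective (hr : r ≠ 0) (g : G) :
    Function.Bijective (rootFiberLift ρ r g) := by
  constructor
  · rintro ξ ξ' h
    have h' := congrArg Subtype.val h
    simp only [rootFiberLift, ConjClasses.mk_eq_mk_iff_isConj,
      isConj_rootFiberSubgroup_iff hr] at h'
    exact Subtype.ext h'.2
  · rintro ⟨c, hc⟩
    obtain ⟨y, rfl⟩ := ConjClasses.exists_rep c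
    have hy : IsConj (y : G × Circle).1 g := ConjClasses.mk_eq_mk_iff_isConj.mp hc
    have hξ : (y : G × Circle).2 ^ r = ρ g := by
      rw [← y.2, ← isConj_iff_eq.mp (ρ.map_isConj hy)]
    refine ⟨⟨_, hξ⟩, Subtype.ext (ConjClasses.mk_eq_mk_iff_isConj.mpr ?_)⟩
    exact ((isConj_rootFiberSubgroup_iff (y := ⟨(g, _), hξ.symm⟩) hr).mpr ⟨hy, rfl⟩).symm

end RootFiber

/-- the well-defined map from conjugacy classes of `G̃_{ρ,r}` to conjugacy
classes of `G` induced by `pr₁` (sending the class of `(g,ξ)` to the class of `g`) has every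
fiber of cardinality exactly `r`: every conjugacy class of `G` has exactly `r` liftings. -/
theorem root_fiber_conjClasses_fiber_card
    {G : Type*} [Group G] (ρ : G →* Circle) (r : ℕ) (hr : 0 < r) :
    (∀ x : rootFiberSubgroup ρ r,
      ConjClasses.map (rootFiberPr1 ρ r) (ConjClasses.mk x) =
        ConjClasses.mk ((x : G × Circle).1)) ∧
    ∀ c : ConjClasses G,
      Nat.card {c' : ConjClasses (rootFiberSubgroup ρ r) //
        ConjClasses.map (rootFiberPr1 ρ r) c' = c} = r := by
  refine ⟨fun _ => rfl, fun c => ?_⟩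
  obtain ⟨g, rfl⟩ := ConjClasses.exists_rep c
  rw [← Nat.card_eq_of_bijective _ (rootFiberLift_bijective hr.ne' g),
    Circle.natCard_pow_eq hr.ne']
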